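/- Two free prenex pp-formulas φ_1(V_1) and φ_2(V_2) are semi-counting equivalent if and only if φ̂_1(V_1) and φ̂_2(V_2) are counting equivalent. -/

import Mathlib

structure Signature where
  symb : Type
  ar : symb → ℕ

structure Struc (σ : Signature) where
  carrier : Type
  rel : ∀ r : σ.symb, (Fin (σ.ar r) → carrier) → Prop

def IsHom {σ : Signature} (A B : Struc σ) (h : A.carrier → B.carrier) : Prop :=
  ∀ r t, A.rel r t → B.rel r (h ∘ t)

def ppSet {σ : Signature} (A : Struc σ) (S : Set A.carrier) (B : Struc σ) :
    Set (S → B.carrier) :=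
  {f | ∃ h : A.carrier → B.carrier, IsHom A B h ∧ ∀ s : S, h s = f s}

noncomputable def ppCount {σ : Signature} (A : Struc σ) (S : Set A.carrier)
    (B : Struc σ) : ℕ :=
  Nat.card (ppSet A S B)

def CountEquiv {σ : Signature} (A₁ : Struc σ) (S₁ : Set A₁.carrier)
    (A₂ : Struc σ) (S₂ : Set A₂.carrier) : Prop :=
  ∀ B : Struc σ, Finite B.carrier → ppCount A₁ S₁ B = ppCount A₂ S₂ B

def SemiCountEquiv {σ : Signature} (A₁ : Struc σ) (S₁ : Set A₁.carrier)
    (A₂ : Struc σ) (S₂ : Set A₂.carrier) : Prop :=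
  ∀ B : Struc σ, Finite B.carrier → 0 < ppCount A₁ S₁ B → 0 < ppCount A₂ S₂ B →
    ppCount A₁ S₁ B = ppCount A₂ S₂ B

def ppGraph {σ : Signature} (A : Struc σ) : SimpleGraph A.carrier where
  Adj x y := x ≠ y ∧ ∃ r t, A.rel r t ∧ (∃ i, t i = x) ∧ (∃ j, t j = y)
  symm := ⟨by
    rintro x y ⟨hxy, r, t, h, hi, hj⟩
    exact ⟨Ne.symm hxy, r, t, h, hj, hi⟩⟩
  loopless := ⟨by rintro x ⟨h, -⟩; exact h rfl⟩

def hatStruc {σ : Signature} (A : Struc σ) (S : Set A.carrier) : Struc σ :=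
  ⟨A.carrier, fun r t => A.rel r t ∧ ∃ i, ∃ s ∈ S, (ppGraph A).Reachable (t i) s⟩

def compStruc {σ : Signature} (A : Struc σ) (c : (ppGraph A).ConnectedComponent) :
    Struc σ :=
  ⟨{a : A.carrier // (ppGraph A).connectedComponentMk a = c},
   fun r t => A.rel r (fun i => (t i).1)⟩

def prodStruc {σ : Signature} (B C : Struc σ) : Struc σ :=
  ⟨B.carrier × C.carrier,
   fun r t => B.rel r (fun i => (t i).1) ∧ C.rel r (fun i => (t i).2)⟩

/-!
If both counts are positive, a homomorphism exists, and a fixed one can be used on the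
components that do not reach the liberal variables; so `φ` and `φ̂` have the same count.

Conversely, adjoin `k` loops to `B`. Then every formula has a solution, and since a connected
component maps entirely into `B` or onto a single loop, the count of `φ̂` factors over its
components as `∏ c, (|φ̂_c(B)| + [c is liberal] k)`. Semi-counting equivalence makes these
polynomials in `k` agree for all `k > 0`, hence also at `k = 0`, which is the count in `B`.
-/

open SimpleGraph

variable {σ : Signature}

lemma SimpleGraph.Reachable.apply_eq_of_forall_adj {V β : Type*} {G : SimpleGraph V}
    {f : V → β} (hf : ∀ x y, G.Adj x y → f x = f y) {x y : V} (h : G.Reachable x y) :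
    f x = f y := by
  obtain ⟨w⟩ := h
  induction w with
  | nil => rfl
  | cons hadj _ ih => exact (hf _ _ hadj).trans ih

lemma Polynomial.eq_of_eval_natCast_eq {p q : Polynomial ℤ}
    (h : ∀ n : ℕ, 0 < n → p.eval (n : ℤ) = q.eval (n : ℤ)) : p = q := by
  refine eq_of_infinite_eval_eq p q
    (Set.infinite_of_injective_forall_mem (f := fun n : ℕ => ((n + 1 : ℕ) : ℤ)) ?_ ?_)
  · intro a b hab
    simpa using hab
  · exact fun n => h (n + 1) n.succ_pos

open Polynomial in
lemma Polynomial.eval_natCast_prod_C_add_C_mul_X {ι : Type*} [Fintype ι] (a e : ι → ℕ)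
    (k : ℕ) :
    (∏ c, (C (a c : ℤ) + C (e c : ℤ) * X)).eval (k : ℤ) =
      ((∏ c, (a c + e c * k) : ℕ) : ℤ) := by
  simp [eval_prod]

open Polynomial in
/-- Both sides are the values at `0` of polynomials in `k` that agree at every `k > 0`. -/
lemma prod_eq_prod_of_forall_pos_prod_add_mul_eq {ι₁ ι₂ : Type*} [Fintype ι₁] [Fintype ι₂]
    {a₁ e₁ : ι₁ → ℕ} {a₂ e₂ : ι₂ → ℕ}
    (h : ∀ k : ℕ, 0 < k → ∏ c, (a₁ c + e₁ c * k) = ∏ c, (a₂ c + e₂ c * k)) :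
    ∏ c, a₁ c = ∏ c, a₂ c := by
  have hpoly : ∏ c, (C (a₁ c : ℤ) + C (e₁ c : ℤ) * X) =
      ∏ c, (C (a₂ c : ℤ) + C (e₂ c : ℤ) * X) :=
    eq_of_eval_natCast_eq fun k hk => by
      rw [eval_natCast_prod_C_add_C_mul_X, eval_natCast_prod_C_add_C_mul_X, h k hk]
  have h0 := congrArg (eval ((0 : ℕ) : ℤ)) hpoly
  rw [eval_natCast_prod_C_add_C_mul_X, eval_natCast_prod_C_add_C_mul_X] at h0
  simpa only [mul_zero, add_zero, Nat.cast_inj] using h0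

section Components

variable {A : Struc σ}

lemma ppGraph_adj_of_rel {r : σ.symb} {t : Fin (σ.ar r) → A.carrier} (h : A.rel r t)
    {i j : Fin (σ.ar r)} (hij : t i ≠ t j) : (ppGraph A).Adj (t i) (t j) :=
  ⟨hij, r, t, h, ⟨i, rfl⟩, ⟨j, rfl⟩⟩

lemma connectedComponentMk_eq_of_rel {r : σ.symb} {t : Fin (σ.ar r) → A.carrier}
    (h : A.rel r t) (i j : Fin (σ.ar r)) :
    (ppGraph A).connectedComponentMk (t i) = (ppGraph A).connectedComponentMk (t j) := by
  by_cases hij : t i = t j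
  · rw [hij]
  · exact ConnectedComponent.sound (ppGraph_adj_of_rel h hij).reachable

/-- No nullary relation holds: such a relation would be shared by all components. -/
def PosArityRels (A : Struc σ) : Prop :=
  ∀ r t, A.rel r t → 0 < σ.ar r

lemma PosArityRels.compStruc (hA : PosArityRels A) (c : (ppGraph A).ConnectedComponent) :
    PosArityRels (compStruc A c) :=
  fun r _ ht => hA r _ ht

instance [Finite A.carrier] (c : (ppGraph A).ConnectedComponent) :
    Finite (compStruc A c).carrier :=
  Subtype.finite

def compSet (A : Struc σ) (S : Set A.carrier) (c : (ppGraph A).ConnectedComponent) :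
    Set (compStruc A c).carrier :=
  Subtype.val ⁻¹' S

lemma IsHom.comp_val {X : Struc σ} {h : A.carrier → X.carrier} (hh : IsHom A X h)
    (c : (ppGraph A).ConnectedComponent) : IsHom (compStruc A c) X (h ∘ Subtype.val) :=
  fun r _ ht => hh r _ ht

lemma isHom_glue (hA : PosArityRels A) {X : Struc σ}
    {h : ∀ c, (compStruc A c).carrier → X.carrier} (hh : ∀ c, IsHom (compStruc A c) X (h c)) :
    IsHom A X (fun a => h _ ⟨a, rfl⟩) := by
  intro r t ht
  obtain ⟨c, hc⟩ : ∃ c, ∀ i, (ppGraph A).connectedComponentMk (t i) = c :=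
    ⟨_, fun i => connectedComponentMk_eq_of_rel ht i ⟨0, hA r t ht⟩⟩
  have hmk : ∀ a (hac : (ppGraph A).connectedComponentMk a = c),
      h _ ⟨a, rfl⟩ = h c ⟨a, hac⟩ := by
    rintro a rfl
    rfl
  convert hh c r (fun i => ⟨t i, hc i⟩) ht using 1
  exact funext fun i => hmk (t i) (hc i)

noncomputable def ppSetEquivPi (hA : PosArityRels A) (S : Set A.carrier) (X : Struc σ) :
    ppSet A S X ≃ ∀ c, ppSet (compStruc A c) (compSet A S c) X where
  toFun f c := ⟨fun x => f.1 ⟨x.1.1, x.2⟩, by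
    obtain ⟨h, hh, hf⟩ := f.2
    exact ⟨h ∘ Subtype.val, hh.comp_val c, fun x => hf ⟨x.1.1, x.2⟩⟩⟩
  invFun F := ⟨fun s => (F _).1 ⟨⟨s.1, rfl⟩, s.2⟩, by
    choose h hh hF using fun c => (F c).2
    exact ⟨fun a => h _ ⟨a, rfl⟩, isHom_glue hA hh, fun s => hF _ ⟨⟨s.1, rfl⟩, s.2⟩⟩⟩
  left_inv _ := rfl
  right_inv F := by
    funext c
    ext ⟨⟨a, rfl⟩, _⟩
    rfl

lemma ppCount_eq_prod (hA : PosArityRels A) (S : Set A.carrier) (X : Struc σ)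
    [Fintype (ppGraph A).ConnectedComponent] :
    ppCount A S X = ∏ c, ppCount (compStruc A c) (compSet A S c) X := by
  rw [ppCount, Nat.card_congr (ppSetEquivPi hA S X), Nat.card_pi]
  rfl

end Components

section Hat

variable {A : Struc σ} {S : Set A.carrier}

instance [Finite A.carrier] : Finite (hatStruc A S).carrier :=
  ‹Finite A.carrier›

lemma posArityRels_hatStruc : PosArityRels (hatStruc A S) :=
  fun _ _ ⟨_, i, _⟩ => i.pos

lemma reachable_hatStruc_of_reachable {x s : A.carrier} (hs : s ∈ S)
    (h : (ppGraph A).Reachable x s) : (ppGraph (hatStruc A S)).Reachable x s := by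
  rw [reachable_iff_reflTransGen] at h
  induction h using Relation.ReflTransGen.head_induction_on with
  | refl => rfl
  | head hxy hys ih =>
    obtain ⟨hne, r, t, ht, ⟨i, rfl⟩, ⟨j, rfl⟩⟩ := hxy
    have hlib : ∃ i, ∃ s ∈ S, (ppGraph A).Reachable (t i) s :=
      ⟨i, s, hs, (ppGraph_adj_of_rel ht hne).reachable.trans
        ((reachable_iff_reflTransGen _ _).2 hys)⟩
    exact (ppGraph_adj_of_rel (A := hatStruc A S) ⟨ht, hlib⟩ hne).reachable.trans ih

lemma not_rel_compStruc_hatStruc {c : (ppGraph (hatStruc A S)).ConnectedComponent}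
    (hc : compSet (hatStruc A S) S c = ∅) (r : σ.symb) (t) :
    ¬ (compStruc (hatStruc A S) c).rel r t := by
  rintro ⟨-, i, s, hs, hreach⟩
  have hsc : (ppGraph (hatStruc A S)).connectedComponentMk s = c :=
    (ConnectedComponent.sound (reachable_hatStruc_of_reachable hs hreach)).symm.trans (t i).2
  exact (Set.eq_empty_iff_forall_notMem.1 hc) ⟨s, hsc⟩ hs

/-- Components of `A` that do not reach `S` can be mapped by any fixed homomorphism. -/
lemma ppSet_hatStruc_eq {X : Struc σ} (hne : (ppSet A S X).Nonempty) :
    ppSet (hatStruc A S) S X = ppSet A S X := by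
  classical
  obtain ⟨-, h₀, hh₀, -⟩ := hne
  refine Set.Subset.antisymm ?_ fun f ⟨h, hh, hf⟩ => ⟨h, fun r t ht => hh r t ht.1, hf⟩
  rintro f ⟨h, hh, hf⟩
  let L : Set A.carrier := {a | ∃ s ∈ S, (ppGraph A).Reachable a s}
  refine ⟨L.piecewise h h₀, fun r t ht => ?_, fun s => ?_⟩
  · by_cases hL : ∃ i, t i ∈ L
    · obtain ⟨i, s, hs, hreach⟩ := hL
      have hall : ∀ j, t j ∈ L := fun j =>
        ⟨s, hs, (ConnectedComponent.exact (connectedComponentMk_eq_of_rel ht j i)).trans hreach⟩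
      rw [show L.piecewise h h₀ ∘ t = h ∘ t from
        funext fun j => Set.piecewise_eq_of_mem _ _ _ (hall j)]
      exact hh r t ⟨ht, i, s, hs, hreach⟩
    · push Not at hL
      rw [show L.piecewise h h₀ ∘ t = h₀ ∘ t from
        funext fun j => Set.piecewise_eq_of_notMem _ _ _ (hL j)]
      exact hh₀ r t ht
  · exact (Set.piecewise_eq_of_mem L h h₀ ⟨s, s.2, Reachable.refl _⟩).trans (hf s)

lemma ppCount_hatStruc_eq {X : Struc σ} (hne : (ppSet A S X).Nonempty) :
    ppCount (hatStruc A S) S X = ppCount A S X := by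
  unfold ppCount
  rw [ppSet_hatStruc_eq hne]
  rfl

end Hat

section Loops

/-- `B` together with `k` fresh elements, each of which forms a one-element substructure
satisfying every relation. -/
def addLoops (B : Struc σ) (k : ℕ) : Struc σ :=
  ⟨B.carrier ⊕ Fin k,
   fun r t => (∃ t', t = Sum.inl ∘ t' ∧ B.rel r t') ∨ ∃ j, t = fun _ => Sum.inr j⟩

variable {A B : Struc σ} {k : ℕ}

instance [Finite B.carrier] : Finite (addLoops B k).carrier :=
  inferInstanceAs (Finite (B.carrier ⊕ Fin k))

lemma IsHom.addLoops_inl {g : A.carrier → B.carrier} (hg : IsHom A B g) :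
    IsHom A (addLoops B k) (Sum.inl ∘ g) :=
  fun r t ht => Or.inl ⟨g ∘ t, rfl, hg r t ht⟩

lemma IsHom.of_addLoops_inl (hA : PosArityRels A) {g : A.carrier → B.carrier}
    (hg : IsHom A (addLoops B k) (Sum.inl ∘ g)) : IsHom A B g := by
  intro r t ht
  rcases hg r t ht with ⟨t', he, hB⟩ | ⟨j, he⟩
  · rwa [show g ∘ t = t' from Sum.inl_injective.comp_left he]
  · exact absurd (congrFun he ⟨0, hA r t ht⟩) Sum.inl_ne_inr

lemma isHom_addLoops_const (j : Fin k) : IsHom A (addLoops B k) (fun _ => Sum.inr j) :=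
  fun _ _ _ => Or.inr ⟨j, rfl⟩

lemma const_mem_ppSet_addLoops (S : Set A.carrier) (j : Fin k) :
    (fun _ => Sum.inr j) ∈ ppSet A S (addLoops B k) :=
  ⟨_, isHom_addLoops_const j, fun _ => rfl⟩

lemma inl_comp_mem_ppSet_addLoops {S : Set A.carrier} {f : S → B.carrier}
    (hf : f ∈ ppSet A S B) : Sum.inl ∘ f ∈ ppSet A S (addLoops B k) :=
  let ⟨h, hh, he⟩ := hf
  ⟨Sum.inl ∘ h, hh.addLoops_inl, fun s => congrArg Sum.inl (he s)⟩

/-- The side of `addLoops B k` a point is sent to (`Sum.getRight?`) is constant along edges. -/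
lemma IsHom.addLoops_cases {c : (ppGraph A).ConnectedComponent}
    {h : (compStruc A c).carrier → (addLoops B k).carrier}
    (hh : IsHom (compStruc A c) (addLoops B k) h) :
    (∃ g, h = Sum.inl ∘ g) ∨ ∃ j, h = fun _ => Sum.inr j := by
  classical
  have hrel : ∀ r t, (compStruc A c).rel r t →
      ∀ i j, (h (t i)).getRight? = (h (t j)).getRight? := by
    intro r t ht i j
    rcases hh r t ht with ⟨t', he, -⟩ | ⟨l, he⟩
    · rw [show h (t i) = _ from congrFun he i, show h (t j) = _ from congrFun he j]
      rfl
    · rw [show h (t i) = _ from congrFun he i, show h (t j) = _ from congrFun he j]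
  let side : A.carrier → Option (Fin k) := fun a =>
    if ha : (ppGraph A).connectedComponentMk a = c then (h ⟨a, ha⟩).getRight? else none
  have hside : ∀ x y, (ppGraph A).Adj x y → side x = side y := by
    rintro x y ⟨-, r, t, ht, ⟨i, rfl⟩, ⟨j, rfl⟩⟩
    by_cases hi : (ppGraph A).connectedComponentMk (t i) = c
    · have hc : ∀ m, (ppGraph A).connectedComponentMk (t m) = c :=
        fun m => (connectedComponentMk_eq_of_rel ht m i).trans hi
      simp only [side, dif_pos (hc _)]
      exact hrel r (fun m => ⟨t m, hc m⟩) ht i j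
    · have hj : (ppGraph A).connectedComponentMk (t j) ≠ c :=
        fun hj => hi ((connectedComponentMk_eq_of_rel ht i j).trans hj)
      simp only [side, dif_neg hi, dif_neg hj]
  obtain ⟨a₀, ha₀⟩ : ∃ a₀, (ppGraph A).connectedComponentMk a₀ = c := c.exists_rep
  have hconst : ∀ a, (h a).getRight? = (h ⟨a₀, ha₀⟩).getRight? := fun a => by
    have := (ConnectedComponent.exact (a.2.trans ha₀.symm)).apply_eq_of_forall_adj hside
    simp only [side, dif_pos a.2, dif_pos ha₀] at this
    exact this
  rcases hj : (h ⟨a₀, ha₀⟩).getRight? with _ | j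
  · have hleft : ∀ a, (h a).isLeft := fun a => Sum.getRight?_eq_none_iff.1 ((hconst a).trans hj)
    exact Or.inl ⟨fun a => (h a).getLeft (hleft a), funext fun a => (Sum.inl_getLeft _ _).symm⟩
  · exact Or.inr ⟨j, funext fun a => Sum.getRight?_eq_some_iff.1 ((hconst a).trans hj)⟩

lemma ppCount_compStruc_addLoops [Finite A.carrier] [Finite B.carrier] (hA : PosArityRels A)
    {c : (ppGraph A).ConnectedComponent} {T : Set (compStruc A c).carrier} (hT : T.Nonempty) :
    ppCount (compStruc A c) T (addLoops B k) = ppCount (compStruc A c) T B + k := by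
  obtain ⟨x₀, hx₀⟩ := hT
  let ψ : ppSet (compStruc A c) T B ⊕ Fin k → ppSet (compStruc A c) T (addLoops B k) :=
    Sum.elim (fun f => ⟨_, inl_comp_mem_ppSet_addLoops f.2⟩)
      (fun j => ⟨_, const_mem_ppSet_addLoops T j⟩)
  have hψ : Function.Bijective ψ := by
    refine ⟨?_, ?_⟩
    · rintro (f | j) (f' | j') he <;>
        have hx := congrFun (congrArg Subtype.val he) ⟨x₀, hx₀⟩
      · exact congrArg Sum.inl (Subtype.ext (funext fun x =>
          Sum.inl_injective (congrFun (congrArg Subtype.val he) x)))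
      · exact absurd hx Sum.inl_ne_inr
      · exact absurd hx.symm Sum.inl_ne_inr
      · exact congrArg Sum.inr (Sum.inr_injective hx)
    · rintro ⟨f, h, hh, he⟩
      rcases hh.addLoops_cases with ⟨g, rfl⟩ | ⟨j, rfl⟩
      · exact ⟨.inl ⟨_, g, (hh.of_addLoops_inl (hA.compStruc c)), fun _ => rfl⟩,
          Subtype.ext (funext he)⟩
      · exact ⟨.inr j, Subtype.ext (funext he)⟩
  unfold ppCount
  rw [← Nat.card_congr (Equiv.ofBijective ψ hψ), Nat.card_sum, Nat.card_fin]

lemma ppCount_eq_one_of_isHom {S : Set A.carrier} (hS : S = ∅) {h : A.carrier → B.carrier}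
    (hh : IsHom A B h) : ppCount A S B = 1 := by
  subst hS
  rw [ppCount, Nat.card_eq_one_iff_unique]
  exact ⟨⟨fun _ _ => Subtype.ext (funext fun s => s.2.elim)⟩,
    ⟨⟨fun s => h s, h, hh, fun _ => rfl⟩⟩⟩

end Loops

section Counting

variable {A B : Struc σ} {S : Set A.carrier}

lemma ppCount_pos_iff [Finite A.carrier] [Finite B.carrier] :
    0 < ppCount A S B ↔ (ppSet A S B).Nonempty := by
  rw [ppCount, Nat.card_pos_iff, Set.nonempty_coe_sort]
  exact and_iff_left inferInstance

lemma ppCount_eq_zero_of_isEmpty (hS : S.Nonempty) [IsEmpty B.carrier] : ppCount A S B = 0 :=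
  have : IsEmpty (ppSet A S B) := ⟨fun f => isEmptyElim (f.1 ⟨_, hS.some_mem⟩)⟩
  Nat.card_of_isEmpty

open Classical in
lemma ppCount_hatStruc_addLoops [Finite A.carrier] [Finite B.carrier] [Nonempty B.carrier]
    [Fintype (ppGraph (hatStruc A S)).ConnectedComponent] {k : ℕ} (hk : 0 < k) :
    ppCount (hatStruc A S) S (addLoops B k) =
      ∏ c, (ppCount (compStruc (hatStruc A S) c) (compSet (hatStruc A S) S c) B +
        (if (compSet (hatStruc A S) S c).Nonempty then 1 else 0) * k) := by
  rw [ppCount_eq_prod (A := hatStruc A S) posArityRels_hatStruc S]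
  refine Finset.prod_congr rfl fun c _ => ?_
  split_ifs with hc
  · rw [one_mul, ppCount_compStruc_addLoops posArityRels_hatStruc hc]
  · have hc := Set.not_nonempty_iff_eq_empty.1 hc
    rw [zero_mul, add_zero, ppCount_eq_one_of_isHom hc (isHom_addLoops_const ⟨0, hk⟩),
      ppCount_eq_one_of_isHom hc (h := fun _ => Classical.arbitrary B.carrier)
        fun r t ht => (not_rel_compStruc_hatStruc hc r t ht).elim]

end Counting

/-- Two free prenex pp-formulas are semi-counting equivalent iff the formulas
obtained by deleting non-liberal components are counting equivalent. -/
theorem stmt11 (σ : Signature) (A₁ A₂ : Struc σ)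
    (S₁ : Set A₁.carrier) (S₂ : Set A₂.carrier)
    [Finite A₁.carrier] [Finite A₂.carrier]
    (h₁ : S₁.Nonempty) (h₂ : S₂.Nonempty) :
    SemiCountEquiv A₁ S₁ A₂ S₂ ↔
      CountEquiv (hatStruc A₁ S₁) S₁ (hatStruc A₂ S₂) S₂ := by
  constructor
  · intro hsemi B _
    rcases isEmpty_or_nonempty B.carrier with hB | hB
    · rw [ppCount_eq_zero_of_isEmpty (A := hatStruc A₁ S₁) h₁,
        ppCount_eq_zero_of_isEmpty (A := hatStruc A₂ S₂) h₂]
    have := Fintype.ofFinite (ppGraph (hatStruc A₁ S₁)).ConnectedComponent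
    have := Fintype.ofFinite (ppGraph (hatStruc A₂ S₂)).ConnectedComponent
    rw [ppCount_eq_prod (A := hatStruc A₁ S₁) posArityRels_hatStruc S₁,
      ppCount_eq_prod (A := hatStruc A₂ S₂) posArityRels_hatStruc S₂]
    have hloops : ∀ k, 0 < k →
        ppCount (hatStruc A₁ S₁) S₁ (addLoops B k) =
          ppCount (hatStruc A₂ S₂) S₂ (addLoops B k) := by
      intro k hk
      have hne : ∀ {A : Struc σ} (S : Set A.carrier), (ppSet A S (addLoops B k)).Nonempty :=
        fun S => ⟨_, const_mem_ppSet_addLoops S ⟨0, hk⟩⟩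
      rw [ppCount_hatStruc_eq (hne S₁), ppCount_hatStruc_eq (hne S₂)]
      exact hsemi _ inferInstance (ppCount_pos_iff.2 (hne S₁)) (ppCount_pos_iff.2 (hne S₂))
    classical
    exact prod_eq_prod_of_forall_pos_prod_add_mul_eq fun k hk =>
      (ppCount_hatStruc_addLoops hk).symm.trans ((hloops k hk).trans (ppCount_hatStruc_addLoops hk))
  · intro hcount B _ hpos₁ hpos₂
    rw [← ppCount_hatStruc_eq (ppCount_pos_iff.1 hpos₁),
      ← ppCount_hatStruc_eq (ppCount_pos_iff.1 hpos₂)]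
    exact hcount B ‹_›
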